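/- Let μ > −1/2 be real and define the Whittaker function M_{0,μ}(t) = t^{μ+1/2} e^{−t/2} Σ_{n=0}^∞ ((μ+1/2)_n / ((2μ+1)_n · n!)) t^n for t > 0. Then for every real x > 0, the integral Whittaker function satisfies ∫₀^x M_{0,μ}(t)/t dt = Γ(μ+1) · Σ_{n=0}^∞ x^{2n+μ+1/2} / ( (2n+μ+1/2) · 16^n · n! · Γ(n+μ+1) ). -/

import Mathlib

/-!
With `a = μ + 1/2`, `M_{0,μ}(t) = t^a e^{-t/2} ₁F₁(a; 2a; t)`, and Kummer's second transformation
`e^{-t/2} ₁F₁(a; 2a; t) = ₀F₁(; a + 1/2; t²/16)` turns `M_{0,μ}(t)/t` into the series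
`∑ t^{2n+μ-1/2} / (16ⁿ n! (μ+1)ₙ)` of positive terms, which is integrated termwise on `[0, x]`;
finally `Γ(n + μ + 1) = (μ+1)ₙ Γ(μ + 1)`. Kummer's identity is checked on coefficients: the
Cauchy product `c_N` of the two series satisfies `(N + 2)(N + 1 + 2a) c_{N+2} = c_N / 4`,
`c_0 = 1`, `c_1 = 0`.
-/

open Real MeasureTheory

/-- The rising factorial (Pochhammer symbol) on the reals. -/
def risingFactorial (a : ℝ) : ℕ → ℝ
  | 0 => 1
  | n + 1 => risingFactorial a n * (a + n)

/-- The Whittaker function of the first kind `M_{κ,μ}`. -/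
noncomputable def whittakerM (κ μ t : ℝ) : ℝ :=
  t ^ (μ + 1 / 2) * Real.exp (-t / 2) *
    ∑' n : ℕ, risingFactorial (μ - κ + 1 / 2) n /
      (risingFactorial (2 * μ + 1) n * Nat.factorial n) * t ^ n

open Finset

theorem risingFactorial_pos {a : ℝ} (ha : 0 < a) : ∀ n, 0 < risingFactorial a n
  | 0 => one_pos
  | n + 1 => mul_pos (risingFactorial_pos ha n) (by positivity)

theorem risingFactorial_le_two_mul {a : ℝ} (ha : 0 < a) :
    ∀ n, risingFactorial a n ≤ risingFactorial (2 * a) n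
  | 0 => le_rfl
  | n + 1 => by
    have hle : a + n ≤ 2 * a + n := by linarith
    exact mul_le_mul (risingFactorial_le_two_mul ha n) hle (by positivity)
      (risingFactorial_pos (by positivity) n).le

theorem Gamma_add_natCast_eq_risingFactorial_mul {a : ℝ} (ha : 0 < a) :
    ∀ n : ℕ, Gamma (a + n) = risingFactorial a n * Gamma a
  | 0 => by simp [risingFactorial]
  | n + 1 => by
    rw [Nat.cast_succ, ← add_assoc, Gamma_add_one (by positivity),
      Gamma_add_natCast_eq_risingFactorial_mul ha n, risingFactorial]
    ring

/-- `kummerCoeff a m` is the coefficient of `tᵐ` in `₁F₁(a; 2a; t)`. -/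
noncomputable def kummerCoeff (a : ℝ) (m : ℕ) : ℝ :=
  risingFactorial a m / (risingFactorial (2 * a) m * m.factorial)

noncomputable def expNegHalfCoeff (j : ℕ) : ℝ := (-(1 / 2) : ℝ) ^ j / j.factorial

noncomputable def cauchyCoeff (a : ℝ) (N : ℕ) : ℝ :=
  ∑ p ∈ antidiagonal N, kummerCoeff a p.1 * expNegHalfCoeff p.2

theorem expNegHalfCoeff_succ (j : ℕ) :
    ((j : ℝ) + 1) * expNegHalfCoeff (j + 1) = -(1 / 2) * expNegHalfCoeff j := by
  have : (j.factorial : ℝ) ≠ 0 := by positivity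
  simp only [expNegHalfCoeff, pow_succ, Nat.factorial_succ, Nat.cast_mul, Nat.cast_succ]
  field_simp

theorem abs_expNegHalfCoeff (j : ℕ) : |expNegHalfCoeff j| = (1 / 2) ^ j / j.factorial := by
  simp [expNegHalfCoeff, abs_div]

section KummerCoeff

variable {a : ℝ}

theorem kummerCoeff_succ (ha : 0 < a) (m : ℕ) :
    ((m : ℝ) + 1) * (m + 2 * a) * kummerCoeff a (m + 1) = (a + m) * kummerCoeff a m := by
  have : risingFactorial (2 * a) m ≠ 0 := (risingFactorial_pos (by positivity) m).ne'
  have : (2 * a + m : ℝ) ≠ 0 := by positivity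
  simp only [kummerCoeff, risingFactorial, Nat.factorial_succ, Nat.cast_mul, Nat.cast_succ]
  field_simp
  ring

theorem kummerCoeff_nonneg (ha : 0 < a) (m : ℕ) : 0 ≤ kummerCoeff a m := by
  have := risingFactorial_pos ha m
  have := risingFactorial_pos (by positivity : 0 < 2 * a) m
  unfold kummerCoeff
  positivity

theorem kummerCoeff_le_inv_factorial (ha : 0 < a) (m : ℕ) :
    kummerCoeff a m ≤ 1 / m.factorial := by
  have := risingFactorial_pos (by positivity : 0 < 2 * a) m
  rw [kummerCoeff, div_le_div_iff₀ (by positivity) (by positivity), one_mul]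
  exact mul_le_mul_of_nonneg_right (risingFactorial_le_two_mul ha m) (by positivity)

end KummerCoeff

section CauchyCoeff

variable {a : ℝ}

theorem sum_antidiagonal_succ_fst_weight (ha : 0 < a) (M : ℕ) :
    ∑ p ∈ antidiagonal (M + 1),
        (p.1 : ℝ) * (p.1 - 1 + 2 * a) * (kummerCoeff a p.1 * expNegHalfCoeff p.2)
      = ∑ p ∈ antidiagonal M, (a + p.1) * (kummerCoeff a p.1 * expNegHalfCoeff p.2) := by
  rw [Nat.sum_antidiagonal_succ]
  simp only [Nat.cast_zero, zero_mul, zero_add]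
  refine sum_congr rfl fun p _ => ?_
  push_cast
  linear_combination expNegHalfCoeff p.2 * kummerCoeff_succ ha p.1

theorem sum_antidiagonal_succ_snd_weight (M : ℕ) :
    ∑ p ∈ antidiagonal (M + 1),
        2 * (p.2 : ℝ) * (p.1 + a) * (kummerCoeff a p.1 * expNegHalfCoeff p.2)
      = -∑ p ∈ antidiagonal M, (a + p.1) * (kummerCoeff a p.1 * expNegHalfCoeff p.2) := by
  rw [Nat.sum_antidiagonal_succ', ← sum_neg_distrib]
  simp only [Nat.cast_zero, mul_zero, zero_mul, zero_add]
  refine sum_congr rfl fun p _ => ?_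
  push_cast
  linear_combination 2 * (p.1 + a) * kummerCoeff a p.1 * expNegHalfCoeff_succ p.2

theorem sum_antidiagonal_add_two_snd_sq_weight (N : ℕ) :
    ∑ p ∈ antidiagonal (N + 2),
        (p.2 : ℝ) * (p.2 - 1) * (kummerCoeff a p.1 * expNegHalfCoeff p.2)
      = cauchyCoeff a N / 4 := by
  rw [Nat.sum_antidiagonal_succ', Nat.sum_antidiagonal_succ', cauchyCoeff, sum_div]
  simp only [Nat.cast_zero, Nat.cast_one, zero_mul, sub_self, mul_zero, zero_add]
  refine sum_congr rfl fun p _ => ?_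
  have h₁ := expNegHalfCoeff_succ (p.2 + 1)
  have h₀ := expNegHalfCoeff_succ p.2
  push_cast at h₁ ⊢
  linear_combination kummerCoeff a p.1 * ((p.2 + 1) * h₁ - (1 / 2) * h₀)

/-- The weight splits as `(N + 2)(N + 1 + 2a) = p (p - 1 + 2a) + q (q - 1) + 2 q (p + a)` over
`p + q = N + 2`, and each part is shifted by the recurrences of the two coefficient sequences. -/
theorem cauchyCoeff_add_two (ha : 0 < a) (N : ℕ) :
    cauchyCoeff a (N + 2) = cauchyCoeff a N / (4 * ((N + 2) * (N + 1 + 2 * a))) := by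
  have hsplit : ((N : ℝ) + 2) * (N + 1 + 2 * a) * cauchyCoeff a (N + 2)
      = ∑ p ∈ antidiagonal (N + 2),
          ((p.1 : ℝ) * (p.1 - 1 + 2 * a) * (kummerCoeff a p.1 * expNegHalfCoeff p.2)
            + ((p.2 : ℝ) * (p.2 - 1) * (kummerCoeff a p.1 * expNegHalfCoeff p.2)
              + 2 * (p.2 : ℝ) * (p.1 + a) * (kummerCoeff a p.1 * expNegHalfCoeff p.2))) := by
    rw [cauchyCoeff, mul_sum]
    refine sum_congr rfl fun p hp => ?_
    have hsum : (p.1 : ℝ) + p.2 = N + 2 := by exact_mod_cast mem_antidiagonal.mp hp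
    rw [show (N : ℝ) = p.1 + p.2 - 2 by linarith]
    ring
  rw [sum_add_distrib, sum_add_distrib, sum_antidiagonal_succ_fst_weight ha,
    sum_antidiagonal_add_two_snd_sq_weight, sum_antidiagonal_succ_snd_weight] at hsplit
  rw [eq_div_iff (by positivity)]
  linear_combination 4 * hsplit

theorem cauchyCoeff_zero (a : ℝ) : cauchyCoeff a 0 = 1 := by
  simp [cauchyCoeff, kummerCoeff, expNegHalfCoeff, risingFactorial]

theorem cauchyCoeff_one (ha : 0 < a) : cauchyCoeff a 1 = 0 := by
  rw [cauchyCoeff, Nat.sum_antidiagonal_succ, Nat.antidiagonal_zero, sum_singleton]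
  simp only [kummerCoeff, expNegHalfCoeff, risingFactorial]
  field_simp
  ring

theorem cauchyCoeff_two_mul_add_one (ha : 0 < a) : ∀ n : ℕ, cauchyCoeff a (2 * n + 1) = 0
  | 0 => cauchyCoeff_one ha
  | n + 1 => by
    rw [show 2 * (n + 1) + 1 = 2 * n + 1 + 2 by ring, cauchyCoeff_add_two ha,
      cauchyCoeff_two_mul_add_one ha n, zero_div]

theorem cauchyCoeff_two_mul (ha : 0 < a) : ∀ n : ℕ,
    cauchyCoeff a (2 * n) = (16 ^ n * risingFactorial (a + 1 / 2) n * n.factorial)⁻¹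
  | 0 => by simp [cauchyCoeff_zero, risingFactorial]
  | n + 1 => by
    have := risingFactorial_pos (by positivity : 0 < a + 1 / 2) n
    rw [show 2 * (n + 1) = 2 * n + 2 by ring, cauchyCoeff_add_two ha,
      cauchyCoeff_two_mul ha n, risingFactorial, pow_succ, Nat.factorial_succ]
    field_simp
    push_cast
    ring

end CauchyCoeff

section KummerSecondTransformation

variable {a : ℝ}

theorem summable_norm_kummerCoeff_mul_pow (ha : 0 < a) (t : ℝ) :
    Summable fun m => ‖kummerCoeff a m * t ^ m‖ := by
  refine (summable_pow_div_factorial |t|).of_nonneg_of_le (fun _ => norm_nonneg _) fun m => ?_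
  rw [norm_mul, norm_pow, norm_of_nonneg (kummerCoeff_nonneg ha m), norm_eq_abs,
    div_eq_mul_one_div, mul_comm]
  exact mul_le_mul_of_nonneg_left (kummerCoeff_le_inv_factorial ha m) (by positivity)

theorem summable_norm_expNegHalfCoeff_mul_pow (t : ℝ) :
    Summable fun j => ‖expNegHalfCoeff j * t ^ j‖ := by
  refine (summable_pow_div_factorial (|t| / 2)).congr fun j => ?_
  rw [norm_mul, norm_pow, norm_eq_abs, norm_eq_abs, abs_expNegHalfCoeff]
  ring

theorem hasSum_expNegHalfCoeff_mul_pow (t : ℝ) :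
    HasSum (fun j => expNegHalfCoeff j * t ^ j) (exp (-t / 2)) := by
  rw [exp_eq_exp_ℝ]
  refine (NormedSpace.exp_series_hasSum_exp' (𝕂 := ℝ) (-t / 2)).congr_fun fun j => ?_
  rw [smul_eq_mul, expNegHalfCoeff, show -t / 2 = -(1 / 2) * t by ring, mul_pow]
  ring

theorem hasSum_cauchyCoeff_mul_pow (ha : 0 < a) (t : ℝ) :
    HasSum (fun N => cauchyCoeff a N * t ^ N) (exp (-t / 2) * ∑' m, kummerCoeff a m * t ^ m) := by
  have hf := summable_norm_kummerCoeff_mul_pow ha t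
  have hg := summable_norm_expNegHalfCoeff_mul_pow t
  have hprod : ∀ N, ∑ p ∈ antidiagonal N,
      kummerCoeff a p.1 * t ^ p.1 * (expNegHalfCoeff p.2 * t ^ p.2) = cauchyCoeff a N * t ^ N := by
    intro N
    rw [cauchyCoeff, sum_mul]
    refine sum_congr rfl fun p hp => ?_
    rw [← mem_antidiagonal.mp hp, pow_add]
    ring
  rw [← (hasSum_expNegHalfCoeff_mul_pow t).tsum_eq, mul_comm,
    tsum_mul_tsum_eq_tsum_sum_antidiagonal_of_summable_norm hf hg]
  simp only [hprod]
  exact ((summable_norm_sum_mul_antidiagonal_of_summable_norm hf hg).of_norm.congr hprod).hasSum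

/-- Kummer's second transformation `e^{-t/2} ₁F₁(a; 2a; t) = ₀F₁(; a + 1/2; t²/16)`. -/
theorem hasSum_exp_neg_half_mul_kummer (ha : 0 < a) (t : ℝ) :
    HasSum (fun n : ℕ => (16 ^ n * risingFactorial (a + 1 / 2) n * n.factorial)⁻¹ * t ^ (2 * n))
      (exp (-t / 2) * ∑' m, kummerCoeff a m * t ^ m) := by
  have hodd : ∀ N ∉ Set.range (2 * ·), cauchyCoeff a N * t ^ N = 0 := by
    intro N hN
    obtain ⟨n, rfl⟩ : ∃ n, N = 2 * n + 1 := by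
      rcases Nat.even_or_odd' N with ⟨n, rfl | rfl⟩
      · exact absurd ⟨n, rfl⟩ hN
      · exact ⟨n, rfl⟩
    rw [cauchyCoeff_two_mul_add_one ha, zero_mul]
  have := ((mul_right_injective₀ two_ne_zero).hasSum_iff hodd).mpr
    (hasSum_cauchyCoeff_mul_pow ha t)
  convert this using 2 with n
  rw [Function.comp_apply, cauchyCoeff_two_mul ha]

end KummerSecondTransformation

theorem integral_const_mul_rpow (c : ℝ) {r : ℝ} (hr : -1 < r) (x : ℝ) :
    ∫ t in 0..x, c * t ^ r = c * (x ^ (r + 1) / (r + 1)) := by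
  rw [intervalIntegral.integral_const_mul, integral_rpow (Or.inl hr),
    zero_rpow (by linarith), sub_zero]

theorem integral_tsum_mul_rpow {c r : ℕ → ℝ} {x : ℝ} (hx : 0 ≤ x) (hr : ∀ n, -1 < r n)
    (hc : Summable fun n => |c n| * (x ^ (r n + 1) / (r n + 1))) :
    ∫ t in 0..x, ∑' n, c n * t ^ r n = ∑' n, c n * (x ^ (r n + 1) / (r n + 1)) := by
  have hint (n : ℕ) : IntegrableOn (fun t => c n * t ^ r n) (Set.Ioc 0 x) :=
    (intervalIntegrable_iff_integrableOn_Ioc_of_le hx).mp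
      ((intervalIntegral.intervalIntegrable_rpow' (hr n)).const_mul (c n))
  have hnorm (n : ℕ) :
      ∫ t in Set.Ioc 0 x, ‖c n * t ^ r n‖ = |c n| * (x ^ (r n + 1) / (r n + 1)) := by
    rw [← integral_const_mul_rpow _ (hr n), intervalIntegral.integral_of_le hx]
    refine setIntegral_congr_fun measurableSet_Ioc fun t ht => ?_
    rw [norm_mul, norm_eq_abs, norm_of_nonneg (rpow_nonneg ht.1.le _)]
  rw [intervalIntegral.integral_of_le hx,
    ← integral_tsum_of_summable_integral_norm hint (hc.congr fun n => (hnorm n).symm)]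
  refine tsum_congr fun n => ?_
  rw [← intervalIntegral.integral_of_le hx, integral_const_mul_rpow _ (hr n)]

theorem whittakerM_zero_eq (μ t : ℝ) :
    whittakerM 0 μ t =
      t ^ (μ + 1 / 2) * exp (-t / 2) * ∑' m, kummerCoeff (μ + 1 / 2) m * t ^ m := by
  rw [whittakerM, sub_zero, show 2 * μ + 1 = 2 * (μ + 1 / 2) by ring]
  rfl

theorem hasSum_whittakerM_zero_div_self {μ : ℝ} (hμ : -(1 / 2) < μ) {t : ℝ} (ht : 0 < t) :
    HasSum (fun n : ℕ => (16 ^ n * risingFactorial (μ + 1) n * n.factorial)⁻¹ *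
      t ^ (2 * n + μ - 1 / 2 : ℝ)) (whittakerM 0 μ t / t) := by
  have hK := (hasSum_exp_neg_half_mul_kummer (by linarith : 0 < μ + 1 / 2) t).mul_left
    (t ^ (μ - 1 / 2))
  rw [show μ + 1 / 2 + 1 / 2 = μ + 1 by ring] at hK
  have hval : whittakerM 0 μ t / t
      = t ^ (μ - 1 / 2) * (exp (-t / 2) * ∑' m, kummerCoeff (μ + 1 / 2) m * t ^ m) := by
    rw [whittakerM_zero_eq, show μ + 1 / 2 = μ - 1 / 2 + 1 by ring, rpow_add_one ht.ne']
    field_simp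
  rw [hval]
  refine hK.congr_fun fun n => ?_
  rw [add_sub_assoc, rpow_add ht, show (2 * n : ℝ) = (2 * n : ℕ) by norm_cast, rpow_natCast]
  ring

theorem summable_whittakerM_zero_integral_terms {μ : ℝ} (hμ : -(1 / 2) < μ) {x : ℝ} (hx : 0 < x) :
    Summable fun n : ℕ => |(16 ^ n * risingFactorial (μ + 1) n * n.factorial)⁻¹| *
      (x ^ (2 * n + μ - 1 / 2 + 1 : ℝ) / (2 * n + μ - 1 / 2 + 1)) := by
  have hK := (hasSum_exp_neg_half_mul_kummer (by linarith : 0 < μ + 1 / 2) x).summable.mul_left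
    (x ^ (μ + 1 / 2) / (μ + 1 / 2))
  rw [show μ + 1 / 2 + 1 / 2 = μ + 1 by ring] at hK
  have hc (n : ℕ) : 0 < (16 ^ n * risingFactorial (μ + 1) n * n.factorial)⁻¹ := by
    have := risingFactorial_pos (by linarith : 0 < μ + 1) n
    positivity
  have ha : 0 < μ + 1 / 2 := by linarith
  have hexp (n : ℕ) : (2 * n + μ - 1 / 2 + 1 : ℝ) = μ + 1 / 2 + (2 * n : ℕ) := by push_cast; ring
  refine hK.of_nonneg_of_le (fun n => ?_) fun n => ?_
  · rw [hexp]
    positivity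
  · rw [abs_of_pos (hc n), hexp, rpow_add hx, rpow_natCast]
    calc _ = x ^ (μ + 1 / 2) * ((16 ^ n * risingFactorial (μ + 1) n * n.factorial)⁻¹ * x ^ (2 * n))
          / (μ + 1 / 2 + (2 * n : ℕ)) := by ring
      _ ≤ x ^ (μ + 1 / 2) * ((16 ^ n * risingFactorial (μ + 1) n * n.factorial)⁻¹ * x ^ (2 * n))
          / (μ + 1 / 2) := by
        have := hc n
        exact div_le_div_of_nonneg_left (by positivity) ha (le_add_of_nonneg_right (by positivity))
      _ = _ := by ring

/-- Series expansion of the integral Whittaker function `Mi₀,μ`. -/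
theorem integral_whittaker_zero_mu (μ : ℝ) (hμ : -(1 / 2) < μ) (x : ℝ) (hx : 0 < x) :
    (∫ t in (0:ℝ)..x, whittakerM 0 μ t / t)
      = Real.Gamma (μ + 1) *
          ∑' n : ℕ, x ^ (2 * n + μ + 1 / 2) /
            ((2 * n + μ + 1 / 2) * 16 ^ n * Nat.factorial n * Real.Gamma (n + μ + 1)) := by
  have hμ₁ : 0 < μ + 1 := by linarith
  have hseries : ∫ t in 0..x, whittakerM 0 μ t / t = ∫ t in 0..x, ∑' n : ℕ,
      (16 ^ n * risingFactorial (μ + 1) n * n.factorial)⁻¹ * t ^ (2 * n + μ - 1 / 2 : ℝ) :=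
    -- only on `(0, x]`: at `t = 0` the left side is the junk value `_ / 0 = 0`
    intervalIntegral.integral_congr_ae <| ae_of_all _ fun t ht =>
      (hasSum_whittakerM_zero_div_self hμ (Set.uIoc_of_le hx.le ▸ ht).1).tsum_eq.symm
  rw [hseries, integral_tsum_mul_rpow hx.le (fun n => by linarith [n.cast_nonneg (α := ℝ)])
    (summable_whittakerM_zero_integral_terms hμ hx), ← tsum_mul_left]
  refine tsum_congr fun n => ?_
  rw [show (n : ℝ) + μ + 1 = μ + 1 + n by ring, Gamma_add_natCast_eq_risingFactorial_mul hμ₁,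
    show 2 * n + μ - 1 / 2 + 1 = 2 * n + μ + 1 / 2 by ring]
  have := risingFactorial_pos hμ₁ n
  have := Gamma_pos_of_pos hμ₁
  field_simp
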